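/- The 4×4 matrix 𝓛 with rows [1/n, 0, −1/(√2 n), 0], [0, 1/n, −1/(√2 n), 0], [−1/(√2 n), −1/(√2 n), (n−1)/n, −√(n−2)/n], [0, 0, −√(n−2)/n, 1/n] has 0, 1/n (with multiplicity at least 2), and 1 among its eigenvalues, for every integer n ≥ 3. -/

import Mathlib

/-! The eigenvalues are witnessed by explicit eigenvectors. As for every normalized Laplacian
`I - D^{-1/2} A D^{-1/2}`, the vector `D^{1/2} 𝟙`, proportional to `(1, 1, √2, √2 √(n-2))`, lies in
the kernel; `(1, 1, √2 (1 - n), √2 √(n-2))` is an eigenvector for `1`; and `(1, -1, 0, 0)` and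
`(√(n-2), √(n-2), 0, -√2)` are independent eigenvectors for `1/n`. Each check is polynomial
arithmetic modulo `√2 ^ 2 = 2` and `√(n-2) ^ 2 = n - 2`. -/

open Real

/-- The normalized Laplacian of the weighted quotient graph `B̃` of `BP_n`:
the `4 × 4` matrix with rows `[1/n, 0, -1/(√2 n), 0]`, `[0, 1/n, -1/(√2 n), 0]`,
`[-1/(√2 n), -1/(√2 n), (n-1)/n, -√(n-2)/n]`, `[0, 0, -√(n-2)/n, 1/n]`. -/
noncomputable def Lcal (n : ℕ) : Matrix (Fin 4) (Fin 4) ℝ :=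
  !![1 / n, 0, -(1 / (Real.sqrt 2 * n)), 0;
     0, 1 / n, -(1 / (Real.sqrt 2 * n)), 0;
     -(1 / (Real.sqrt 2 * n)), -(1 / (Real.sqrt 2 * n)), ((n : ℝ) - 1) / n,
       -(Real.sqrt ((n : ℝ) - 2) / n);
     0, 0, -(Real.sqrt ((n : ℝ) - 2) / n), 1 / n]

open Matrix Module Module.End

section Eigen

variable {R ι : Type*} [CommRing R] [Fintype ι] [DecidableEq ι]

theorem Matrix.mem_eigenspace_toLin'_iff {A : Matrix ι ι R} {μ : R} {v : ι → R} :
    v ∈ eigenspace (toLin' A) μ ↔ A *ᵥ v = μ • v := by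
  rw [mem_eigenspace_iff, toLin'_apply]

theorem Matrix.hasEigenvalue_toLin'_of_mulVec_eq {A : Matrix ι ι R} {μ : R} {v : ι → R}
    (hv : v ≠ 0) (h : A *ᵥ v = μ • v) : HasEigenvalue (toLin' A) μ :=
  hasEigenvalue_of_hasEigenvector ⟨mem_eigenspace_toLin'_iff.mpr h, hv⟩

end Eigen

theorem Submodule.card_le_finrank_of_linearIndependent {K V ι : Type*} [DivisionRing K]
    [AddCommGroup V] [Module K V] [FiniteDimensional K V] [Fintype ι] {p : Submodule K V}
    {v : ι → V} (hv : LinearIndependent K v) (hp : ∀ i, v i ∈ p) :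
    Fintype.card ι ≤ finrank K p :=
  (linearIndependent_iff_card_le_finrank_span.mp hv).trans
    (Submodule.finrank_mono (Submodule.span_le.mpr (Set.range_subset_iff.mpr hp)))

theorem Lcal_mulVec (n : ℕ) (x : Fin 4 → ℝ) :
    Lcal n *ᵥ x = ![x 0 / n - x 2 / (√2 * n), x 1 / n - x 2 / (√2 * n),
      -((x 0 + x 1) / (√2 * n)) + (n - 1) / n * x 2 - √(n - 2) / n * x 3,
      -(√(n - 2) / n * x 2) + x 3 / n] := by
  ext i
  fin_cases i <;> simp [Lcal, mulVec, dotProduct, Fin.sum_univ_four] <;> ring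

theorem sq_sqrt_natCast_sub_two {n : ℕ} (hn : 2 ≤ n) : √((n : ℝ) - 2) ^ 2 = n - 2 :=
  sq_sqrt (sub_nonneg.mpr (by exact_mod_cast hn))

theorem Lcal_mulVec_eigenvector_zero {n : ℕ} (hn : 2 ≤ n) :
    Lcal n *ᵥ ![1, 1, √2, √2 * √(n - 2)] = 0 := by
  have h2 : √2 ^ 2 = 2 := sq_sqrt zero_le_two
  have hs := sq_sqrt_natCast_sub_two hn
  rw [Lcal_mulVec]
  ext i
  fin_cases i <;> simp <;> grind

theorem Lcal_mulVec_eigenvector_one {n : ℕ} (hn : 2 ≤ n) :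
    Lcal n *ᵥ ![1, 1, √2 * (1 - n), √2 * √(n - 2)] = ![1, 1, √2 * (1 - n), √2 * √(n - 2)] := by
  have h2 : √2 ^ 2 = 2 := sq_sqrt zero_le_two
  have hs := sq_sqrt_natCast_sub_two hn
  rw [Lcal_mulVec]
  ext i
  fin_cases i <;> simp <;> grind

theorem Lcal_mulVec_eigenvector_inv₁ (n : ℕ) :
    Lcal n *ᵥ ![1, -1, 0, 0] = (1 / n : ℝ) • ![1, -1, 0, 0] := by
  rw [Lcal_mulVec]
  ext i
  fin_cases i <;> simp [div_eq_inv_mul]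

theorem Lcal_mulVec_eigenvector_inv₂ (n : ℕ) :
    Lcal n *ᵥ ![√(n - 2), √(n - 2), 0, -√2] = (1 / n : ℝ) • ![√(n - 2), √(n - 2), 0, -√2] := by
  have h2 : √2 ^ 2 = 2 := sq_sqrt zero_le_two
  rw [Lcal_mulVec]
  ext i
  fin_cases i <;> simp <;> grind

theorem linearIndependent_Lcal_eigenvectors_inv (n : ℕ) :
    LinearIndependent ℝ ![(![1, -1, 0, 0] : Fin 4 → ℝ), ![√(n - 2), √(n - 2), 0, -√2]] := by
  rw [LinearIndependent.pair_iff]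
  intro a b hab
  have h0 := congrFun hab 0
  have h3 := congrFun hab 3
  simp at h0 h3
  simp_all

/-- For every integer `n ≥ 3`, the matrix `𝓛` above has `0`,
`1/n` (with multiplicity at least `2`), and `1` among its eigenvalues. -/
theorem Lcal_eigenvalues (n : ℕ) (hn : 3 ≤ n) :
    Module.End.HasEigenvalue (Matrix.toLin' (Lcal n)) 0 ∧
      Module.End.HasEigenvalue (Matrix.toLin' (Lcal n)) 1 ∧
      2 ≤ Module.finrank ℝ
        (Module.End.eigenspace (Matrix.toLin' (Lcal n)) (1 / n)) := by
  have hn2 : 2 ≤ n := by omega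
  refine ⟨hasEigenvalue_toLin'_of_mulVec_eq ?_
      (by rw [Lcal_mulVec_eigenvector_zero hn2, zero_smul]),
    hasEigenvalue_toLin'_of_mulVec_eq ?_ (by rw [Lcal_mulVec_eigenvector_one hn2, one_smul]), ?_⟩
  · exact fun h => by simpa using congrFun h 0
  · exact fun h => by simpa using congrFun h 0
  · have hmem : ∀ i, ![(![1, -1, 0, 0] : Fin 4 → ℝ), ![√(n - 2), √(n - 2), 0, -√2]] i ∈
        eigenspace (toLin' (Lcal n)) (1 / n) := by
      intro i
      fin_cases i
      exacts [mem_eigenspace_toLin'_iff.mpr (Lcal_mulVec_eigenvector_inv₁ n),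
        mem_eigenspace_toLin'_iff.mpr (Lcal_mulVec_eigenvector_inv₂ n)]
    simpa using Submodule.card_le_finrank_of_linearIndependent
      (linearIndependent_Lcal_eigenvectors_inv n) hmem
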